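/- Complex projective space ℙ^N minus a linear subspace ℙ^{N-q} admits a C² exhaustion function whose Levi form has at least N - q + 1 positive eigenvalues at every point; i.e., ℙ^N \ ℙ^{N-q} is q-complete. In the special case q = 1, ℙ^N \ ℙ^{N-1} ≅ ℂ^N is Stein (1-complete). -/

import Mathlib

/-- The Levi form (complex Hessian) of a function `ρ : ℂ^{N+1} → ℝ` at `z` in the
direction `v`: `L(v) = ¼ (D²ρ(v,v) + D²ρ(iv,iv)) = Σ ∂²ρ/∂z_j∂z̄_k v_j v̄_k`. -/
noncomputable def leviFormAt {N : ℕ} (ρ : (Fin N → ℂ) → ℝ) (z v : Fin N → ℂ) : ℝ :=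
  (iteratedFDeriv ℝ 2 ρ z ![v, v]
    + iteratedFDeriv ℝ 2 ρ z ![Complex.I • v, Complex.I • v]) / 4

namespace QComplete

variable {n : ℕ}

/-- the full squared euclidean norm -/
noncomputable def En (x : Fin n → ℂ) : ℝ := ∑ j, Complex.normSq (x j)

/-- the truncated squared norm (first q coordinates) -/
noncomputable def hn (q : ℕ) (x : Fin n → ℂ) : ℝ :=
  ∑ j : Fin n, if (j : ℕ) < q then Complex.normSq (x j) else 0

lemma En_nonneg (x : Fin n → ℂ) : 0 ≤ En x :=
  Finset.sum_nonneg fun _ _ => Complex.normSq_nonneg _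

lemma hn_nonneg (q : ℕ) (x : Fin n → ℂ) : 0 ≤ hn q x :=
  Finset.sum_nonneg fun j _ => by by_cases hc : (j:ℕ) < q <;> simp [hc, Complex.normSq_nonneg]

lemma contDiff_normSq : ContDiff ℝ 2 (fun w : ℂ => Complex.normSq w) := by
  have : ContDiff ℝ 2 (fun w : ℂ => w.re * w.re + w.im * w.im) :=
    (Complex.reCLM.contDiff.mul Complex.reCLM.contDiff).add
      (Complex.imCLM.contDiff.mul Complex.imCLM.contDiff)
  simpa [Complex.normSq_apply] using this

lemma contDiff_En : ContDiff ℝ 2 (En (n := n)) :=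
  ContDiff.sum fun j _ => contDiff_normSq.comp (ContinuousLinearMap.proj (R := ℝ)
      (φ := fun _ : Fin n => ℂ) j).contDiff

lemma contDiff_hn (q : ℕ) : ContDiff ℝ 2 (hn (n := n) q) := by
  refine ContDiff.sum fun j _ => ?_
  by_cases hj : (j : ℕ) < q
  · simpa [hj, Function.comp_def] using contDiff_normSq.comp (ContinuousLinearMap.proj (R := ℝ)
      (φ := fun _ : Fin n => ℂ) j).contDiff
  · simpa [hj] using contDiff_const (c := (0:ℝ))

lemma hn_pos {q : ℕ} {x : Fin n → ℂ} (hx : ∃ j : Fin n, (j : ℕ) < q ∧ x j ≠ 0) :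
    0 < hn q x := by
  obtain ⟨j, hj, hxj⟩ := hx
  refine Finset.sum_pos' (fun i _ => by by_cases hc : (i:ℕ) < q <;> simp [hc, Complex.normSq_nonneg]) ⟨j, Finset.mem_univ j, ?_⟩
  simp [hj, Complex.normSq_pos.2 hxj]

lemma hn_eq_zero {q : ℕ} {x : Fin n → ℂ} (hx : ¬ ∃ j : Fin n, (j : ℕ) < q ∧ x j ≠ 0) :
    hn q x = 0 := by
  push_neg at hx
  refine Finset.sum_eq_zero fun j _ => ?_
  by_cases hj : (j : ℕ) < q
  · simp [hj, hx j hj]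
  · simp [hj]

/-- second derivative of a real quadratic -/
lemma deriv_deriv_quadratic (a b c : ℝ) :
    deriv (deriv (fun t : ℝ => a + t * b + t * t * c)) 0 = 2 * c := by
  have h1 : deriv (fun t : ℝ => a + t * b + t * t * c) = fun t => b + (t + t) * c := by
    funext t
    have : HasDerivAt (fun t : ℝ => a + t * b + t * t * c) (b + (t + t) * c) t := by
      have h0 : HasDerivAt (fun t : ℝ => t) 1 t := hasDerivAt_id t
      have := ((h0.mul_const b).const_add a).add ((h0.mul h0).mul_const c)
      exact (this.congr_deriv (by ring)).congr_of_eventuallyEq (Filter.Eventually.of_forall fun s => rfl)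
    exact this.deriv
  rw [h1]
  have : HasDerivAt (fun t : ℝ => b + (t + t) * c) (2 * c) 0 := by
    have h0 : HasDerivAt (fun t : ℝ => t) 1 (0:ℝ) := hasDerivAt_id 0
    have := ((h0.add h0).mul_const c).const_add b
    exact (this.congr_deriv (by ring)).congr_of_eventuallyEq (Filter.Eventually.of_forall fun s => rfl)
  exact this.deriv

/-- Directional second derivative along a line for functions C² on an open set. -/
lemma iteratedFDeriv_two_line {f : (Fin n → ℂ) → ℝ} {U : Set (Fin n → ℂ)}
    (hU : IsOpen U) (hf : ContDiffOn ℝ 2 f U) {z : Fin n → ℂ} (hz : z ∈ U)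
    (v : Fin n → ℂ) :
    iteratedFDeriv ℝ 2 f z ![v, v] = deriv (deriv (fun t : ℝ => f (z + t • v))) 0 := by
  have hline : ∀ t : ℝ, HasDerivAt (fun s : ℝ => z + s • v) v t := by
    intro t
    have := ((hasDerivAt_id t).smul_const v).const_add z
    simpa using this
  have hcont : Continuous (fun t : ℝ => z + t • v) := by continuity
  have h0 : z + (0:ℝ) • v = z := by simp
  have hmem : ∀ᶠ t in nhds (0:ℝ), z + t • v ∈ U :=
    (hcont.continuousAt (x := (0:ℝ))).preimage_mem_nhds (by rw [h0]; exact hU.mem_nhds hz)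
  have hdiff : DifferentiableOn ℝ f U := hf.differentiableOn (by norm_num)
  have hg' : (deriv (fun s : ℝ => f (z + s • v))) =ᶠ[nhds (0:ℝ)]
      (fun t : ℝ => fderiv ℝ f (z + t • v) v) := by
    filter_upwards [hmem] with t ht
    have h1 : DifferentiableAt ℝ f (z + t • v) :=
      hdiff.differentiableAt (hU.mem_nhds ht)
    exact (h1.hasFDerivAt.comp_hasDerivAt t (hline t)).deriv
  rw [hg'.deriv_eq]
  -- derivative of x ↦ fderiv f x
  have hΦ : ContDiffOn ℝ 1 (fderiv ℝ f) U := hf.fderiv_of_isOpen hU le_rfl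
  have hΦz : DifferentiableAt ℝ (fderiv ℝ f) z :=
    (hΦ.differentiableOn one_ne_zero).differentiableAt (hU.mem_nhds hz)
  have heval : HasFDerivAt (fun x => fderiv ℝ f x v)
      ((ContinuousLinearMap.apply ℝ ℝ v).comp (fderiv ℝ (fderiv ℝ f) z)) (z + (0:ℝ) • v) := by
    rw [h0]; exact (ContinuousLinearMap.apply ℝ ℝ v).hasFDerivAt.comp z hΦz.hasFDerivAt
  have hcomp : HasDerivAt (fun t : ℝ => fderiv ℝ f (z + t • v) v)
      (((ContinuousLinearMap.apply ℝ ℝ v).comp (fderiv ℝ (fderiv ℝ f) z)) v) 0 := by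
    have := heval.comp_hasDerivAt (0:ℝ) (hline 0)
    simpa [Function.comp_def] using this
  rw [hcomp.deriv, iteratedFDeriv_two_apply]
  simp

lemma En_pos {x : Fin n → ℂ} (hx : x ≠ 0) : 0 < En x := by
  obtain ⟨j, hj⟩ := Function.ne_iff.1 hx
  exact Finset.sum_pos' (fun i _ => Complex.normSq_nonneg _)
    ⟨j, Finset.mem_univ j, Complex.normSq_pos.2 (by simpa using hj)⟩

lemma En_smul (c : ℂ) (x : Fin n → ℂ) : En (c • x) = Complex.normSq c * En x := by
  simp [En, Finset.mul_sum, Complex.normSq_mul]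

lemma hn_smul (q : ℕ) (c : ℂ) (x : Fin n → ℂ) :
    hn q (c • x) = Complex.normSq c * hn q x := by
  rw [hn, hn, Finset.mul_sum]
  refine Finset.sum_congr rfl fun j _ => ?_
  by_cases hj : (j : ℕ) < q <;> simp [hj, Complex.normSq_mul]

lemma hn_line {q : ℕ} {w : Fin n → ℂ} (hw : ∀ j : Fin n, (j : ℕ) < q → w j = 0)
    (z : Fin n → ℂ) (t : ℝ) : hn q (z + t • w) = hn q z := by
  refine Finset.sum_congr rfl fun j _ => ?_
  by_cases hj : (j : ℕ) < q <;> simp [hj, hw _]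

lemma En_line (z w : Fin n → ℂ) (t : ℝ) :
    En (z + t • w) = En z + t * (∑ j : Fin n,
      (2 * ((z j).re * (w j).re + (z j).im * (w j).im))) + t * t * En w := by
  rw [En, En, En, Finset.mul_sum, Finset.mul_sum, ← Finset.sum_add_distrib,
    ← Finset.sum_add_distrib]
  refine Finset.sum_congr rfl fun j _ => ?_
  simp only [Pi.add_apply, Pi.smul_apply, Complex.real_smul, Complex.normSq_apply,
    Complex.add_re, Complex.add_im, Complex.mul_re, Complex.mul_im,
    Complex.ofReal_re, Complex.ofReal_im]
  ring

end QComplete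

open QComplete

/-- `ℙ^N \ ℙ^{N-q}` is `q`-complete. In homogeneous terms: on the cone
`S = {z ∈ ℂ^{N+1} : (z_0, …, z_{q-1}) ≠ 0}` over `ℙ^N \ ℙ^{N-q}` there exists a
nonnegative, scale-invariant C² function `ρ` which descends to an exhaustion of
`ℙ^N \ ℙ^{N-q}` (for each `c`, the part of the unit sphere of the cone where `ρ ≤ c` is
compact) and whose Levi form is positive on a complex subspace of dimension
`N - q + 1` transverse to the line `ℂz` at each point of the cone. -/
theorem projective_space_minus_linear_subspace_q_complete
    (N q : ℕ) (hq1 : 1 ≤ q) (hqN : q ≤ N) :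
    ∃ ρ : (Fin (N + 1) → ℂ) → ℝ,
      (∀ z : Fin (N + 1) → ℂ, (∃ j : Fin (N + 1), (j : ℕ) < q ∧ z j ≠ 0) →
        0 ≤ ρ z ∧
        ContDiffAt ℝ 2 ρ z ∧
        (∀ c : ℂ, c ≠ 0 → ρ (c • z) = ρ z) ∧
        (∃ W : Submodule ℂ (Fin (N + 1) → ℂ),
          N - q + 1 ≤ Module.finrank ℂ W ∧
          (∀ w ∈ W, ∀ c : ℂ, w = c • z → w = 0) ∧
          ∀ v ∈ W, v ≠ 0 → 0 < leviFormAt ρ z v)) ∧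
      ∀ c : ℝ, IsCompact {z : Fin (N + 1) → ℂ |
        ‖z‖ = 1 ∧ (∃ j : Fin (N + 1), (j : ℕ) < q ∧ z j ≠ 0) ∧ ρ z ≤ c} := by
  classical
  set n := N + 1 with hn_def
  set ρ : (Fin n → ℂ) → ℝ := fun x => En x / hn q x with hρ
  set U : Set (Fin n → ℂ) := {x | hn q x ≠ 0} with hU_def
  have hUopen : IsOpen U := by
    have : U = (hn (n := n) q) ⁻¹' {0}ᶜ := by ext x; simp [hU_def]
    rw [this]
    exact isOpen_compl_singleton.preimage (contDiff_hn q).continuous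
  have hρsmooth : ContDiffOn ℝ 2 ρ U :=
    (contDiff_En.contDiffOn).div ((contDiff_hn q).contDiffOn) fun x hx => hx
  -- second derivative along admissible directions
  have key : ∀ z : Fin n → ℂ, hn q z ≠ 0 → ∀ w : Fin n → ℂ,
      (∀ j : Fin n, (j : ℕ) < q → w j = 0) →
      iteratedFDeriv ℝ 2 ρ z ![w, w] = 2 * (En w / hn q z) := by
    intro z hz w hw
    rw [iteratedFDeriv_two_line hUopen hρsmooth hz w]
    have hfun : (fun t : ℝ => ρ (z + t • w)) = fun t : ℝ =>
        En z / hn q z + t * ((∑ j : Fin n,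
          (2 * ((z j).re * (w j).re + (z j).im * (w j).im))) / hn q z)
          + t * t * (En w / hn q z) := by
      funext t
      rw [hρ]
      simp only
      rw [hn_line hw, En_line]
      ring
    rw [hfun, deriv_deriv_quadratic]
  refine ⟨ρ, ?_, ?_⟩
  · intro z hzS
    have hD : 0 < hn q z := hn_pos hzS
    refine ⟨div_nonneg (En_nonneg z) hD.le, ?_, ?_, ?_⟩
    · exact (contDiff_En.contDiffAt).div ((contDiff_hn q).contDiffAt) hD.ne'
    · intro c hc
      have hc2 : Complex.normSq c ≠ 0 := by simpa [Complex.normSq_eq_zero] using hc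
      rw [hρ]; simp only
      rw [En_smul, hn_smul, mul_div_mul_left _ _ hc2]
    · -- the subspace
      have hq' : q ≤ n := by omega
      set W : Submodule ℂ (Fin n → ℂ) :=
        LinearMap.ker (LinearMap.funLeft ℂ ℂ (Fin.castLE hq')) with hW
      have hmemW : ∀ v : Fin n → ℂ, v ∈ W ↔ ∀ j : Fin n, (j : ℕ) < q → v j = 0 := by
        intro v
        constructor
        · intro hv j hj
          have := congrFun (LinearMap.mem_ker.1 hv) ⟨(j : ℕ), hj⟩
          simpa [LinearMap.funLeft_apply, Fin.castLE, Fin.ext_iff] using this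
        · intro hv
          rw [LinearMap.mem_ker]
          funext i
          exact hv _ (by simpa using i.2)
      refine ⟨W, ?_, ?_, ?_⟩
      · have hrank := LinearMap.finrank_range_add_finrank_ker
          (LinearMap.funLeft ℂ ℂ (Fin.castLE hq'))
        rw [LinearMap.range_eq_top.2 (LinearMap.funLeft_surjective_of_injective ℂ ℂ _
          (Fin.castLE_injective hq')), finrank_top, Module.finrank_fin_fun] at hrank
        rw [← hW] at hrank
        have hfr : Module.finrank ℂ (Fin n → ℂ) = n := Module.finrank_fin_fun ℂ
        rw [hfr] at hrank
        omega
      · intro w hw c hwc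
        obtain ⟨j, hj, hzj⟩ := hzS
        have hwj : w j = 0 := (hmemW w).1 hw j hj
        have : c * z j = 0 := by
          have := congrFun hwc j
          simp only [Pi.smul_apply, smul_eq_mul] at this
          rw [← this]; exact hwj
        rcases mul_eq_zero.1 this with hc0 | hz0
        · rw [hwc, hc0, zero_smul]
        · exact absurd hz0 hzj
      · intro v hv hv0
        have hvw := (hmemW v).1 hv
        have hIvw : ∀ j : Fin n, (j : ℕ) < q → (Complex.I • v) j = 0 := by
          intro j hj; simp [hvw j hj]
        have h1 := key z hD.ne' v hvw
        have h2 := key z hD.ne' (Complex.I • v) hIvw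
        have hEI : En (Complex.I • v) = En v := by
          simp [En, Complex.normSq_mul]
        have hEv : 0 < En v := En_pos hv0
        rw [leviFormAt, h1, h2, hEI]
        have : (2 * (En v / hn q z) + 2 * (En v / hn q z)) / 4 = En v / hn q z := by ring
        rw [this]
        exact div_pos hEv hD
  · -- compactness of sublevel sets on the sphere
    intro c
    have hE : Continuous (En (n := n)) := contDiff_En.continuous
    have hh : Continuous (hn (n := n) q) := (contDiff_hn q).continuous
    have hKset : {z : Fin n → ℂ | ‖z‖ = 1 ∧ (∃ j : Fin n, (j : ℕ) < q ∧ z j ≠ 0) ∧ ρ z ≤ c}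
        = {z : Fin n → ℂ | ‖z‖ = 1} ∩ ({z | 1 ≤ c * hn q z} ∩ {z | En z ≤ c * hn q z}) := by
      ext z
      simp only [Set.mem_setOf_eq, Set.mem_inter_iff]
      constructor
      · rintro ⟨hz1, hzS, hρc⟩
        have hD : 0 < hn q z := hn_pos hzS
        have hEc : En z ≤ c * hn q z := (div_le_iff₀ hD).1 hρc
        have hE1 : 1 ≤ En z := by
          obtain ⟨i, -, hi⟩ := Finset.exists_mem_eq_sup (Finset.univ : Finset (Fin n))
            ⟨⟨0, by omega⟩, Finset.mem_univ _⟩ fun i => ‖z i‖₊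
          have hnorm : ‖z i‖ = 1 := by
            have : ‖z‖₊ = ‖z i‖₊ := by rw [← hi]; rfl
            have h2 : ‖z‖ = ‖z i‖ := congrArg NNReal.toReal this
            rw [← h2, hz1]
          have h3 : Complex.normSq (z i) = 1 := by
            rw [← Complex.sq_norm, hnorm]; norm_num
          calc (1:ℝ) = Complex.normSq (z i) := h3.symm
            _ ≤ En z := Finset.single_le_sum
                (fun j _ => Complex.normSq_nonneg (z j)) (Finset.mem_univ i)
        exact ⟨hz1, le_trans hE1 hEc, hEc⟩
      · rintro ⟨hz1, h1, h2⟩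
        have hD : 0 < hn q z := by
          rcases lt_or_eq_of_le (hn_nonneg q z) with h | h
          · exact h
          · exfalso; rw [← h] at h1; simp at h1; linarith
        have hzS : ∃ j : Fin n, (j : ℕ) < q ∧ z j ≠ 0 := by
          by_contra hcon
          rw [hn_eq_zero hcon] at hD
          exact lt_irrefl 0 hD
        exact ⟨hz1, hzS, (div_le_iff₀ hD).2 h2⟩
    rw [hKset]
    refine (isCompact_sphere (0 : Fin n → ℂ) 1).of_isClosed_subset ?_ ?_
    · exact (isClosed_eq continuous_norm continuous_const).inter
        ((isClosed_le continuous_const (continuous_const.mul hh)).inter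
          (isClosed_le hE (continuous_const.mul hh)))
    · intro z hz
      rw [mem_sphere_zero_iff_norm]
      exact hz.1
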